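/- Suppose K = G ⋈ H is an internal Zappa–Szép product of cancellative monoids G and H that act on each other by bijections. Then for every h ∈ H, the bijection g ↦ h ▷ g is an isomorphism of the poset (G, ≼_G) of left-divisibility: g₁ ≼ g₂ if and only if h ▷ g₁ ≼ h ▷ g₂. -/

import Mathlib

/-!
Associativity of `K` and uniqueness of the `GH`-factorisation give the cocycle law
`h ▷ (g₁ g₂) = (h ▷ g₁) ((h ◁ g₁) ▷ g₂)`, so `h ▷ -` preserves `≼`. Conversely, by surjectivity
of `(h ◁ g₁) ▷ -` every `v` with `h ▷ g₂ = (h ▷ g₁) v` is of the form `(h ◁ g₁) ▷ u`, hence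
`h ▷ g₂ = h ▷ (g₁ u)`, and injectivity of `h ▷ -` gives `g₂ = g₁ u`.
-/

namespace ZSPaper

/-- Internal Zappa–Szép product: every element of `K` has a unique `GH`-decomposition
and a unique `HG`-decomposition. -/
structure ZS (K : Type*) [Monoid K] (G H : Submonoid K) : Prop where
  exGH : ∀ k : K, ∃! p : G × H, (p.1 : K) * (p.2 : K) = k
  exHG : ∀ k : K, ∃! p : H × G, (p.1 : K) * (p.2 : K) = k

variable {K : Type*} [Monoid K] {G H : Submonoid K}

/-- `h ▷ g`, defined by `h * g = (h ▷ g) * (h ◁ g)`. -/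
noncomputable def ZS.rtr (zs : ZS K G H) (h : H) (g : G) : G :=
  ((zs.exGH ((h : K) * (g : K))).choose).1

/-- `h ◁ g`, defined by `h * g = (h ▷ g) * (h ◁ g)`. -/
noncomputable def ZS.rtl (zs : ZS K G H) (h : H) (g : G) : H :=
  ((zs.exGH ((h : K) * (g : K))).choose).2

/-- `g ▶ h`, defined by `g * h = (g ▶ h) * (g ◀ h)`. -/
noncomputable def ZS.ltr (zs : ZS K G H) (g : G) (h : H) : H :=
  ((zs.exHG ((g : K) * (h : K))).choose).1

/-- `g ◀ h`, defined by `g * h = (g ▶ h) * (g ◀ h)`. -/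
noncomputable def ZS.ltl (zs : ZS K G H) (g : G) (h : H) : G :=
  ((zs.exHG ((g : K) * (h : K))).choose).2

/-- Right divisibility: `x` is a suffix of `y`. -/
def RDvd {M : Type*} [Monoid M] (x y : M) : Prop := ∃ u, y = u * x

/-- An atom of a monoid. -/
def MAtom {M : Type*} [Monoid M] (a : M) : Prop :=
  a ≠ 1 ∧ ∀ u v : M, a = u * v → u = 1 ∨ v = 1

/-- An atomic monoid: generated by its atoms, with bounded lengths of atomic
decompositions. -/
def Atomic (M : Type*) [Monoid M] : Prop :=
  (∀ x : M, ∃ l : List M, (∀ a ∈ l, MAtom a) ∧ l.prod = x) ∧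
  ∀ x : M, ∃ N : ℕ, ∀ l : List M, (∀ a ∈ l, MAtom a) → l.prod = x → l.length ≤ N

/-- `m` is the least common upper bound of the set `S` with respect to
left divisibility. -/
def IsDvdLUB {M : Type*} [Monoid M] (S : Set M) (m : M) : Prop :=
  (∀ s ∈ S, s ∣ m) ∧ ∀ n, (∀ s ∈ S, s ∣ n) → m ∣ n

/-- `m` is the least common upper bound of `x` and `y` with respect to left
divisibility. -/
def IsDvdLCM {M : Type*} [Monoid M] (x y m : M) : Prop :=
  x ∣ m ∧ y ∣ m ∧ ∀ n, x ∣ n → y ∣ n → m ∣ n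

/-- `d = Δ_x`, the least common upper bound of `{ y \ x : y ∈ M }`, where
`y * (y \ x) = y ∨ x`. -/
def IsDeltaOf {M : Type*} [Monoid M] (x d : M) : Prop :=
  IsDvdLUB {t : M | ∃ y, IsDvdLCM y x (y * t)} d

/-- A Garside structure on a monoid `M` with Garside element `Δ`. -/
structure GarsideStructure (M : Type*) [Monoid M] (Δ : M) : Prop where
  mul_left_cancel : ∀ a b c : M, a * b = a * c → b = c
  mul_right_cancel : ∀ a b c : M, b * a = c * a → b = c
  atomic : Atomic M
  meet_left : ∀ x y : M, ∃ d, d ∣ x ∧ d ∣ y ∧ ∀ e, e ∣ x → e ∣ y → e ∣ d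
  join_left : ∀ x y : M, ∃ m, x ∣ m ∧ y ∣ m ∧ ∀ n, x ∣ n → y ∣ n → m ∣ n
  meet_right : ∀ x y : M, ∃ d, RDvd d x ∧ RDvd d y ∧ ∀ e, RDvd e x → RDvd e y → RDvd e d
  join_right : ∀ x y : M, ∃ m, RDvd x m ∧ RDvd y m ∧ ∀ n, RDvd x n → RDvd y n → RDvd m n
  balanced : ∀ x, x ∣ Δ ↔ RDvd x Δ
  div_finite : {x : M | x ∣ Δ}.Finite
  div_gen : Submonoid.closure {x : M | x ∣ Δ} = ⊤

end ZSPaper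

namespace ZSPaper.ZS

variable {K : Type*} [Monoid K] {G H : Submonoid K} (zs : ZS K G H)

theorem rtr_mul_rtl (h : H) (g : G) : (zs.rtr h g : K) * zs.rtl h g = h * g :=
  (zs.exGH _).choose_spec.1

theorem eq_rtr_of_mul_eq {h : H} {g a : G} {b : H} (hab : (a : K) * b = h * g) :
    a = zs.rtr h g :=
  congrArg Prod.fst ((zs.exGH _).choose_spec.2 (a, b) hab)

theorem rtr_mul (h : H) (g₁ g₂ : G) :
    zs.rtr h (g₁ * g₂) = zs.rtr h g₁ * zs.rtr (zs.rtl h g₁) g₂ := by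
  refine (zs.eq_rtr_of_mul_eq (b := zs.rtl (zs.rtl h g₁) g₂) ?_).symm
  push_cast
  rw [mul_assoc, rtr_mul_rtl, ← mul_assoc, rtr_mul_rtl, mul_assoc]

theorem rtr_dvd_rtr {g₁ g₂ : G} (h : H) (hg : g₁ ∣ g₂) : zs.rtr h g₁ ∣ zs.rtr h g₂ := by
  obtain ⟨u, rfl⟩ := hg
  exact ⟨_, zs.rtr_mul h g₁ u⟩

theorem dvd_of_rtr_dvd_rtr {h : H} {g₁ g₂ : G} (hinj : Function.Injective (zs.rtr h))
    (hsurj : Function.Surjective (zs.rtr (zs.rtl h g₁))) (hg : zs.rtr h g₁ ∣ zs.rtr h g₂) :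
    g₁ ∣ g₂ := by
  obtain ⟨v, hv⟩ := hg
  obtain ⟨u, rfl⟩ := hsurj v
  exact ⟨u, hinj (by rw [rtr_mul, hv])⟩

end ZSPaper.ZS

open ZSPaper Function

theorem stmt12_general {K : Type*} [Monoid K] {G H : Submonoid K} (zs : ZS K G H)
    (hb₁ : ∀ h : H, Function.Bijective (zs.rtr h)) :
    ∀ (h : H) (g₁ g₂ : G), g₁ ∣ g₂ ↔ zs.rtr h g₁ ∣ zs.rtr h g₂ :=
  fun h _ _ => ⟨zs.rtr_dvd_rtr h, zs.dvd_of_rtr_dvd_rtr (hb₁ h).1 (hb₁ _).2⟩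

theorem stmt12 {K : Type*} [Monoid K] {G H : Submonoid K} (zs : ZS K G H)
    (hGl : ∀ a b c : G, a * b = a * c → b = c)
    (hGr : ∀ a b c : G, b * a = c * a → b = c)
    (hHl : ∀ a b c : H, a * b = a * c → b = c)
    (hHr : ∀ a b c : H, b * a = c * a → b = c)
    (hb₁ : ∀ h : H, Function.Bijective (zs.rtr h))
    (hb₂ : ∀ h : H, Function.Bijective (fun g : G => zs.ltl g h))
    (hb₃ : ∀ g : G, Function.Bijective (fun h : H => zs.rtl h g))
    (hb₄ : ∀ g : G, Function.Bijective (zs.ltr g)) :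
    ∀ (h : H) (g₁ g₂ : G), g₁ ∣ g₂ ↔ zs.rtr h g₁ ∣ zs.rtr h g₂ :=
  stmt12_general zs hb₁
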